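/- Let ε, β, μ > 0, let ζ(t,X), b(X) be smooth (X ∈ ℝ²) with h := 1 + εζ − βb > 0, and let V̄(t,X) ∈ ℝ² (independent of z), V*(t,X,z) ∈ ℝ², w̃(t,X,z) ∈ ℝ, ω_h(t,X,z) ∈ ℝ² be smooth and satisfy, for −1 + βb ≤ z ≤ εζ: (i) ∂_z V* − √μ ∇w̃ = −ω_h^⊥; (ii) ∇·V̄ + √μ ∇·V* + ∂_z w̃ = 0; (iii) w̃|_{z=−1+βb} = β∇b·(V̄ + √μ V*|_{z=−1+βb}); (iv) V* has zero vertical mean: ∫_{−1+βb}^{εζ} V* dz = 0. Define the operator (T W)(z) = ∫_z^{εζ} ∇∇·( ∫_{−1+βb}^{z'} W dz'' ) dz', T*W = TW − (1/h)∫_{−1+βb}^{εζ} TW dz, the shear velocity V_sh = ∫_z^{εζ} ω_h^⊥ dz', and V*_sh = V_sh − (1/h)∫_{−1+βb}^{εζ} V_sh dz. Then the exact identity (1 − μT*)V* = √μ T*V̄ + V*_sh holds for all z in the water column. -/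

import Mathlib

noncomputable section

open intervalIntegral

def Smooth2 (f : ℝ → ℝ → ℝ) : Prop :=
  ContDiff ℝ (⊤ : ℕ∞) fun p : ℝ × ℝ => f p.1 p.2

def Smooth3 (f : ℝ → ℝ → ℝ → ℝ) : Prop :=
  ContDiff ℝ (⊤ : ℕ∞) fun p : ℝ × ℝ × ℝ => f p.1 p.2.1 p.2.2

def Smooth4 (f : ℝ → ℝ → ℝ → ℝ → ℝ) : Prop :=
  ContDiff ℝ (⊤ : ℕ∞) fun p : ℝ × ℝ × ℝ × ℝ => f p.1 p.2.1 p.2.2.1 p.2.2.2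

noncomputable def px (f : ℝ → ℝ → ℝ → ℝ) (t x y : ℝ) : ℝ := deriv (fun u => f t u y) x
noncomputable def py (f : ℝ → ℝ → ℝ → ℝ) (t x y : ℝ) : ℝ := deriv (fun u => f t x u) y
/-- i-th horizontal derivative of a function of (t,x,y) -/
noncomputable def pd3 (i : Fin 2) (f : ℝ → ℝ → ℝ → ℝ) (t x y : ℝ) : ℝ :=
  if i = 0 then px f t x y else py f t x y
/-- i-th horizontal derivative of a function of (t,x,y,z) at fixed z -/
noncomputable def pd4 (i : Fin 2) (f : ℝ → ℝ → ℝ → ℝ → ℝ) (t x y z : ℝ) : ℝ :=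
  if i = 0 then deriv (fun u => f t u y z) x else deriv (fun u => f t x u z) y
noncomputable def pz (f : ℝ → ℝ → ℝ → ℝ → ℝ) (t x y z : ℝ) : ℝ := deriv (fun u => f t x y u) z
noncomputable def qx (f : ℝ → ℝ → ℝ) (x y : ℝ) : ℝ := deriv (fun u => f u y) x
noncomputable def qy (f : ℝ → ℝ → ℝ) (x y : ℝ) : ℝ := deriv (fun u => f x u) y

/-- ∇·(∫_{−1+βb}^{zp} W), as a function of (t,x,y) for fixed zp. -/
noncomputable def divInt (β : ℝ) (b : ℝ → ℝ → ℝ) (W : Fin 2 → ℝ → ℝ → ℝ → ℝ → ℝ)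
    (t x y zp : ℝ) : ℝ :=
  px (fun t' x' y' => ∫ z'' in (-1 + β * b x' y')..zp, W 0 t' x' y' z'') t x y
    + py (fun t' x' y' => ∫ z'' in (-1 + β * b x' y')..zp, W 1 t' x' y' z'') t x y

/-- the operator (T W)(z) = ∫_z^{εζ} ∇∇·(∫_{−1+βb}^{z'} W) dz', i-th component. -/
noncomputable def TTop (ε β : ℝ) (ζ : ℝ → ℝ → ℝ → ℝ) (b : ℝ → ℝ → ℝ)
    (W : Fin 2 → ℝ → ℝ → ℝ → ℝ → ℝ) (i : Fin 2) (t x y z : ℝ) : ℝ :=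
  ∫ zp in z..(ε * ζ t x y),
    pd3 i (fun t' x' y' => divInt β b W t' x' y' zp) t x y

/-- T*W = TW − (1/h)∫_{−1+βb}^{εζ} TW dz. -/
noncomputable def Tstar (ε β : ℝ) (ζ : ℝ → ℝ → ℝ → ℝ) (b : ℝ → ℝ → ℝ)
    (W : Fin 2 → ℝ → ℝ → ℝ → ℝ → ℝ) (i : Fin 2) (t x y z : ℝ) : ℝ :=
  TTop ε β ζ b W i t x y z
    - (1 + ε * ζ t x y - β * b x y)⁻¹ *
        ∫ zq in (-1 + β * b x y)..(ε * ζ t x y), TTop ε β ζ b W i t x y zq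

/-- the shear velocity V_sh = ∫_z^{εζ} ω_h^⊥, where ω_h^⊥ = (−ω₂, ω₁). -/
noncomputable def Vsh (ε : ℝ) (ζ : ℝ → ℝ → ℝ → ℝ) (ω : Fin 2 → ℝ → ℝ → ℝ → ℝ → ℝ)
    (i : Fin 2) (t x y z : ℝ) : ℝ :=
  ∫ zp in z..(ε * ζ t x y),
    (if i = 0 then -(ω 1 t x y zp) else ω 0 t x y zp)

/-- V*_sh = V_sh − (1/h)∫ V_sh. -/
noncomputable def Vshstar (ε β : ℝ) (ζ : ℝ → ℝ → ℝ → ℝ) (b : ℝ → ℝ → ℝ)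
    (ω : Fin 2 → ℝ → ℝ → ℝ → ℝ → ℝ) (i : Fin 2) (t x y z : ℝ) : ℝ :=
  Vsh ε ζ ω i t x y z
    - (1 + ε * ζ t x y - β * b x y)⁻¹ *
        ∫ zq in (-1 + β * b x y)..(ε * ζ t x y), Vsh ε ζ ω i t x y zq

/-! ### Auxiliary calculus toolbox -/

open MeasureTheory Set Asymptotics Metric

lemma contDiff_fderiv_apply' {E : Type*} [NormedAddCommGroup E] [NormedSpace ℝ E]
    {F : E → ℝ} (hF : ContDiff ℝ (⊤ : ℕ∞) F) (v : E) :
    ContDiff ℝ (⊤ : ℕ∞) (fun p => fderiv ℝ F p v) :=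
  (hF.fderiv_right (by simp)).clm_apply contDiff_const

lemma hasDerivAt_line' {E : Type*} [NormedAddCommGroup E] [NormedSpace ℝ E]
    {F : E → ℝ} (hF : ContDiff ℝ (⊤ : ℕ∞) F) {γ : ℝ → E} {v : E} {s : ℝ}
    (hγ : HasDerivAt γ v s) :
    HasDerivAt (fun u => F (γ u)) (fderiv ℝ F (γ s) v) s :=
  ((hF.differentiable (by simp)).differentiableAt.hasFDerivAt).comp_hasDerivAt s hγ

lemma hasFDerivAt_integral_endpoint {f : ℝ × ℝ → ℝ} (hf : Continuous f) (s₀ p₀ : ℝ) :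
    HasFDerivAt (fun q : ℝ × ℝ => ∫ z in q.2..p₀, f (q.1, z))
      ((-f (s₀, p₀)) • ContinuousLinearMap.snd ℝ ℝ ℝ) (s₀, p₀) := by
  rw [hasFDerivAt_iff_isLittleO_nhds_zero, Asymptotics.isLittleO_iff]
  intro c hc
  obtain ⟨δ, hδ, hball⟩ := Metric.continuousAt_iff.1 hf.continuousAt c hc
  filter_upwards [Metric.ball_mem_nhds (0 : ℝ × ℝ) hδ] with q hq
  have hqn : ‖q‖ < δ := by simpa [dist_zero_right] using hq
  have hq1 : |q.1| < δ := lt_of_le_of_lt (by rw [Prod.norm_def]; exact le_max_left _ _) hqn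
  have hq2 : |q.2| < δ := lt_of_le_of_lt (by rw [Prod.norm_def]; exact le_max_right _ _) hqn
  have key : ∀ z ∈ Set.uIoc (p₀ + q.2 : ℝ) p₀, ‖f (s₀ + q.1, z) - f (s₀, p₀)‖ ≤ c := by
    intro z hz
    have hzd : |z - p₀| ≤ |q.2| := by
      rcases Set.mem_uIoc.1 hz with ⟨h1, h2⟩ | ⟨h1, h2⟩ <;>
        · rw [abs_le]
          constructor <;> nlinarith [le_abs_self q.2, neg_abs_le q.2]
    have hd : dist (s₀ + q.1, z) (s₀, p₀) < δ := by
      rw [Prod.dist_eq]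
      exact max_lt (by simpa [Real.dist_eq] using hq1)
        (by rw [Real.dist_eq]; exact lt_of_le_of_lt hzd hq2)
    exact le_of_lt (hball hd)
  have hfc : Continuous fun z : ℝ => f (s₀ + q.1, z) := hf.comp (by continuity)
  have e0 : (∫ z in (p₀ + q.2 : ℝ)..p₀, f (s₀ + q.1, z)) - (-f (s₀, p₀)) * q.2
      = ∫ z in (p₀ + q.2 : ℝ)..p₀, (f (s₀ + q.1, z) - f (s₀, p₀)) := by
    rw [intervalIntegral.integral_sub (hfc.intervalIntegrable _ _)
      (intervalIntegrable_const), intervalIntegral.integral_const]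
    simp [smul_eq_mul]; ring
  have bound := intervalIntegral.norm_integral_le_of_norm_le_const key
  calc ‖(∫ z in ((s₀, p₀) + q).2..p₀, f (((s₀, p₀) + q).1, z))
        - (∫ z in (s₀, p₀).2..p₀, f ((s₀, p₀).1, z))
        - ((-f (s₀, p₀)) • ContinuousLinearMap.snd ℝ ℝ ℝ) q‖
      = ‖∫ z in (p₀ + q.2 : ℝ)..p₀, (f (s₀ + q.1, z) - f (s₀, p₀))‖ := by
        rw [← e0]; simp [Prod.fst_add, Prod.snd_add]
    _ ≤ c * |p₀ - (p₀ + q.2)| := bound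
    _ ≤ c * ‖q‖ := by
        apply mul_le_mul_of_nonneg_left _ hc.le
        have h1 : |p₀ - (p₀ + q.2)| = |q.2| := by rw [abs_sub_comm]; ring_nf
        rw [h1, Prod.norm_def]
        exact le_max_right _ _

lemma hasDerivAt_integral_param {f : ℝ × ℝ → ℝ} (hf : ContDiff ℝ (⊤ : ℕ∞) f) (p c s₀ : ℝ) :
    HasDerivAt (fun s => ∫ z in p..c, f (s, z))
      (∫ z in p..c, fderiv ℝ f (s₀, z) (1, 0)) s₀ := by
  have hfc : Continuous f := hf.continuous
  have hf' : Continuous (fun q : ℝ × ℝ => fderiv ℝ f q (1, 0)) :=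
    (contDiff_fderiv_apply' hf _).continuous
  obtain ⟨M, hM⟩ := ((isCompact_closedBall s₀ 1).prod
    (isCompact_uIcc (a := p) (b := c))).exists_bound_of_continuousOn hf'.continuousOn
  have := intervalIntegral.hasDerivAt_integral_of_dominated_loc_of_deriv_le
    (F := fun s z => f (s, z)) (F' := fun s z => fderiv ℝ f (s, z) (1, 0))
    (x₀ := s₀) (a := p) (b := c) (μ := MeasureTheory.volume) (bound := fun _ => M) (s := Metric.ball s₀ 1) (Metric.ball_mem_nhds s₀ one_pos)
    (Filter.Eventually.of_forall fun x =>
      ((hfc.comp (by continuity : Continuous fun z : ℝ => (x, z))).aestronglyMeasurable))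
    ((hfc.comp (by continuity : Continuous fun z : ℝ => (s₀, z))).intervalIntegrable _ _)
    ((hf'.comp (by continuity : Continuous fun z : ℝ => (s₀, z))).aestronglyMeasurable)
    (Filter.Eventually.of_forall fun t ht x hx => by
      exact hM (x, t) ⟨Metric.ball_subset_closedBall hx, Set.uIoc_subset_uIcc ht⟩)
    (intervalIntegrable_const)
    (Filter.Eventually.of_forall fun t ht x hx =>
      hasDerivAt_line' hf ((hasDerivAt_id x).prodMk (hasDerivAt_const x t)))
  exact this.2

/-- Master Leibniz rule: moving lower endpoint, fixed upper endpoint, parametric integrand. -/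
lemma leibniz_lower {f : ℝ × ℝ → ℝ} (hf : ContDiff ℝ (⊤ : ℕ∞) f) {a : ℝ → ℝ} {a' : ℝ} {s₀ : ℝ}
    (ha : HasDerivAt a a' s₀) (c : ℝ) :
    HasDerivAt (fun s => ∫ z in a s..c, f (s, z))
      ((∫ z in a s₀..c, fderiv ℝ f (s₀, z) (1, 0)) - a' * f (s₀, a s₀)) s₀ := by
  set p₀ := a s₀ with hp₀
  have hfc : Continuous f := hf.continuous
  have hsplit : ∀ q : ℝ × ℝ, (∫ z in q.2..c, f (q.1, z))
      = (∫ z in q.2..p₀, f (q.1, z)) + (∫ z in p₀..c, f (q.1, z)) := by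
    intro q
    rw [intervalIntegral.integral_add_adjacent_intervals] <;>
      exact (hfc.comp (by continuity : Continuous fun z : ℝ => (q.1, z))).intervalIntegrable _ _
  have h1 := hasFDerivAt_integral_endpoint hfc s₀ p₀
  have h2 : HasFDerivAt (fun q : ℝ × ℝ => ∫ z in p₀..c, f (q.1, z))
      ((ContinuousLinearMap.smulRight (1 : ℝ →L[ℝ] ℝ)
        (∫ z in p₀..c, fderiv ℝ f (s₀, z) (1, 0))).comp (ContinuousLinearMap.fst ℝ ℝ ℝ))
      (s₀, p₀) :=
    by
      have := ((hasDerivAt_integral_param hf p₀ c s₀).hasFDerivAt).comp (s₀, p₀)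
        (hasFDerivAt_fst (𝕜 := ℝ) (p := (s₀, p₀)) :
          HasFDerivAt (Prod.fst : ℝ × ℝ → ℝ) _ (s₀, p₀))
      exact this.congr_fderiv (by ext <;> simp)
  have hΦ : HasFDerivAt (fun q : ℝ × ℝ => ∫ z in q.2..c, f (q.1, z))
      (((-f (s₀, p₀)) • ContinuousLinearMap.snd ℝ ℝ ℝ) +
        ((ContinuousLinearMap.smulRight (1 : ℝ →L[ℝ] ℝ)
          (∫ z in p₀..c, fderiv ℝ f (s₀, z) (1, 0))).comp (ContinuousLinearMap.fst ℝ ℝ ℝ)))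
      (s₀, p₀) := by
    refine (h1.add h2).congr_of_eventuallyEq ?_
    exact Filter.Eventually.of_forall fun q => (hsplit q)
  have hγ : HasDerivAt (fun s => ((s : ℝ), a s)) ((1 : ℝ), a') s₀ :=
    (hasDerivAt_id s₀).prodMk ha
  have := hΦ.comp_hasDerivAt s₀ hγ
  refine this.congr_deriv ?_
  simp [ContinuousLinearMap.smulRight_apply, smul_eq_mul]
  ring

noncomputable def D2 (f : ℝ → ℝ → ℝ) (v p : ℝ × ℝ) : ℝ :=
  fderiv ℝ (fun q : ℝ × ℝ => f q.1 q.2) p v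
noncomputable def D3 (f : ℝ → ℝ → ℝ → ℝ) (v p : ℝ × ℝ × ℝ) : ℝ :=
  fderiv ℝ (fun q : ℝ × ℝ × ℝ => f q.1 q.2.1 q.2.2) p v
noncomputable def D4 (f : ℝ → ℝ → ℝ → ℝ → ℝ) (v p : ℝ × ℝ × ℝ × ℝ) : ℝ :=
  fderiv ℝ (fun q : ℝ × ℝ × ℝ × ℝ => f q.1 q.2.1 q.2.2.1 q.2.2.2) p v

lemma D2_contDiff {f} (hf : Smooth2 f) (v : ℝ × ℝ) : ContDiff ℝ (⊤ : ℕ∞) (D2 f v) :=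
  contDiff_fderiv_apply' hf v
lemma D3_contDiff {f} (hf : Smooth3 f) (v : ℝ × ℝ × ℝ) : ContDiff ℝ (⊤ : ℕ∞) (D3 f v) :=
  contDiff_fderiv_apply' hf v
lemma D4_contDiff {f} (hf : Smooth4 f) (v : ℝ × ℝ × ℝ × ℝ) : ContDiff ℝ (⊤ : ℕ∞) (D4 f v) :=
  contDiff_fderiv_apply' hf v

lemma D2_hx {f} (hf : Smooth2 f) (x y : ℝ) :
    HasDerivAt (fun u => f u y) (D2 f (1, 0) (x, y)) x :=
  hasDerivAt_line' hf ((hasDerivAt_id x).prodMk (hasDerivAt_const x y))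
lemma D2_hy {f} (hf : Smooth2 f) (x y : ℝ) :
    HasDerivAt (fun v => f x v) (D2 f (0, 1) (x, y)) y :=
  hasDerivAt_line' hf ((hasDerivAt_const y x).prodMk (hasDerivAt_id y))
lemma D3_hx {f} (hf : Smooth3 f) (t x y : ℝ) :
    HasDerivAt (fun u => f t u y) (D3 f (0, 1, 0) (t, x, y)) x :=
  hasDerivAt_line' hf ((hasDerivAt_const x t).prodMk ((hasDerivAt_id x).prodMk (hasDerivAt_const x y)))
lemma D3_hy {f} (hf : Smooth3 f) (t x y : ℝ) :
    HasDerivAt (fun v => f t x v) (D3 f (0, 0, 1) (t, x, y)) y :=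
  hasDerivAt_line' hf ((hasDerivAt_const y t).prodMk ((hasDerivAt_const y x).prodMk (hasDerivAt_id y)))
lemma D4_hx {f} (hf : Smooth4 f) (t x y z : ℝ) :
    HasDerivAt (fun u => f t u y z) (D4 f (0, 1, 0, 0) (t, x, y, z)) x :=
  hasDerivAt_line' hf ((hasDerivAt_const x t).prodMk ((hasDerivAt_id x).prodMk
    ((hasDerivAt_const x y).prodMk (hasDerivAt_const x z))))
lemma D4_hy {f} (hf : Smooth4 f) (t x y z : ℝ) :
    HasDerivAt (fun v => f t x v z) (D4 f (0, 0, 1, 0) (t, x, y, z)) y :=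
  hasDerivAt_line' hf ((hasDerivAt_const y t).prodMk ((hasDerivAt_const y x).prodMk
    ((hasDerivAt_id y).prodMk (hasDerivAt_const y z))))
lemma D4_hz {f} (hf : Smooth4 f) (t x y z : ℝ) :
    HasDerivAt (fun w => f t x y w) (D4 f (0, 0, 0, 1) (t, x, y, z)) z :=
  hasDerivAt_line' hf ((hasDerivAt_const z t).prodMk ((hasDerivAt_const z x).prodMk
    ((hasDerivAt_const z y).prodMk (hasDerivAt_id z))))
/-- Leibniz evaluation of divInt, valid at every point. -/
lemma divInt_formula {β : ℝ} {b : ℝ → ℝ → ℝ} (hb : Smooth2 b)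
    {W : Fin 2 → ℝ → ℝ → ℝ → ℝ → ℝ} (hW : ∀ j, Smooth4 (W j)) (t x y zp : ℝ) :
    divInt β b W t x y zp
      = (∫ z'' in (-1 + β * b x y)..zp,
          (D4 (W 0) (0, 1, 0, 0) (t, x, y, z'') + D4 (W 1) (0, 0, 1, 0) (t, x, y, z'')))
        - β * (D2 b (1, 0) (x, y) * W 0 t x y (-1 + β * b x y)
             + D2 b (0, 1) (x, y) * W 1 t x y (-1 + β * b x y)) := by
  have hfx : ContDiff ℝ (⊤ : ℕ∞) (fun q : ℝ × ℝ => W 0 t q.1 y q.2) := (hW 0).comp (contDiff_const.prodMk (contDiff_fst.prodMk (contDiff_const.prodMk contDiff_snd)))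
  have hfy : ContDiff ℝ (⊤ : ℕ∞) (fun q : ℝ × ℝ => W 1 t x q.1 q.2) := (hW 1).comp (contDiff_const.prodMk (contDiff_const.prodMk (contDiff_fst.prodMk contDiff_snd)))
  have hax : HasDerivAt (fun u => -1 + β * b u y) (β * D2 b (1, 0) (x, y)) x :=
    ((D2_hx hb x y).const_mul β).const_add (-1)
  have hay : HasDerivAt (fun v => -1 + β * b x v) (β * D2 b (0, 1) (x, y)) y :=
    ((D2_hy hb x y).const_mul β).const_add (-1)
  have hpx := (leibniz_lower hfx hax zp).deriv
  have hpy := (leibniz_lower hfy hay zp).deriv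
  have hix : ∀ z'' : ℝ, fderiv ℝ (fun q : ℝ × ℝ => W 0 t q.1 y q.2) (x, z'') (1, 0)
      = D4 (W 0) (0, 1, 0, 0) (t, x, y, z'') := fun z'' =>
    (hasDerivAt_line' hfx ((hasDerivAt_id x).prodMk (hasDerivAt_const x z''))).unique
      (D4_hx (hW 0) t x y z'')
  have hiy : ∀ z'' : ℝ, fderiv ℝ (fun q : ℝ × ℝ => W 1 t x q.1 q.2) (y, z'') (1, 0)
      = D4 (W 1) (0, 0, 1, 0) (t, x, y, z'') := fun z'' =>
    (hasDerivAt_line' hfy ((hasDerivAt_id y).prodMk (hasDerivAt_const y z''))).unique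
      (D4_hy (hW 1) t x y z'')
  have c1 : Continuous (fun z'' : ℝ => D4 (W 0) (0, 1, 0, 0) (t, x, y, z'')) :=
    (D4_contDiff (hW 0) _).continuous.comp (by continuity)
  have c2 : Continuous (fun z'' : ℝ => D4 (W 1) (0, 0, 1, 0) (t, x, y, z'')) :=
    (D4_contDiff (hW 1) _).continuous.comp (by continuity)
  have : divInt β b W t x y zp
      = ((∫ z'' in (-1 + β * b x y)..zp, D4 (W 0) (0, 1, 0, 0) (t, x, y, z''))
          - (β * D2 b (1, 0) (x, y)) * W 0 t x y (-1 + β * b x y))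
        + ((∫ z'' in (-1 + β * b x y)..zp, D4 (W 1) (0, 0, 1, 0) (t, x, y, z''))
          - (β * D2 b (0, 1) (x, y)) * W 1 t x y (-1 + β * b x y)) := by
    rw [divInt, px, py, hpx, hpy]
    rw [intervalIntegral.integral_congr (fun z'' _ => hix z''),
        intervalIntegral.integral_congr (fun z'' _ => hiy z'')]
  rw [this, intervalIntegral.integral_add (c1.intervalIntegrable _ _) (c2.intervalIntegrable _ _)]
  ring

lemma divInt_diff_x {β : ℝ} {b : ℝ → ℝ → ℝ} (hb : Smooth2 b)
    {W : Fin 2 → ℝ → ℝ → ℝ → ℝ → ℝ} (hW : ∀ j, Smooth4 (W j)) (t x y zp : ℝ) :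
    DifferentiableAt ℝ (fun u => divInt β b W t u y zp) x := by
  have hfun : (fun u => divInt β b W t u y zp) = fun u =>
      (∫ z'' in (-1 + β * b u y)..zp, (fun q : ℝ × ℝ =>
        D4 (W 0) (0, 1, 0, 0) (t, q.1, y, q.2) + D4 (W 1) (0, 0, 1, 0) (t, q.1, y, q.2)) (u, z''))
      - β * (D2 b (1, 0) (u, y) * W 0 t u y (-1 + β * b u y)
           + D2 b (0, 1) (u, y) * W 1 t u y (-1 + β * b u y)) :=
    funext fun u => divInt_formula hb hW t u y zp
  rw [hfun]
  have emb : ContDiff ℝ (⊤ : ℕ∞) (fun q : ℝ × ℝ => ((t, q.1, y, q.2) : ℝ × ℝ × ℝ × ℝ)) :=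
    contDiff_const.prodMk (contDiff_fst.prodMk (contDiff_const.prodMk contDiff_snd))
  have hG : ContDiff ℝ (⊤ : ℕ∞) (fun q : ℝ × ℝ =>
      D4 (W 0) (0, 1, 0, 0) (t, q.1, y, q.2) + D4 (W 1) (0, 0, 1, 0) (t, q.1, y, q.2)) :=
    ((D4_contDiff (hW 0) _).comp emb).add ((D4_contDiff (hW 1) _).comp emb)
  have hax : HasDerivAt (fun u => -1 + β * b u y) (β * D2 b (1, 0) (x, y)) x :=
    ((D2_hx hb x y).const_mul β).const_add (-1)
  refine DifferentiableAt.sub (leibniz_lower hG hax zp).differentiableAt ?_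
  refine DifferentiableAt.const_mul ?_ β
  have e2 : ContDiff ℝ (⊤ : ℕ∞) (fun u : ℝ => ((u, y) : ℝ × ℝ)) := contDiff_id.prodMk contDiff_const
  have t1 : DifferentiableAt ℝ (fun u => D2 b (1, 0) (u, y)) x :=
    (((D2_contDiff hb _).comp e2).differentiable (by simp)).differentiableAt
  have t3 : DifferentiableAt ℝ (fun u => D2 b (0, 1) (u, y)) x :=
    (((D2_contDiff hb _).comp e2).differentiable (by simp)).differentiableAt
  have hγ : HasDerivAt (fun u => ((t, u, y, -1 + β * b u y) : ℝ × ℝ × ℝ × ℝ))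
      ((0, 1, 0, β * D2 b (1, 0) (x, y))) x :=
    (hasDerivAt_const x t).prodMk ((hasDerivAt_id x).prodMk ((hasDerivAt_const x y).prodMk hax))
  have t2 : DifferentiableAt ℝ (fun u => W 0 t u y (-1 + β * b u y)) x :=
    (hasDerivAt_line' (hW 0) hγ).differentiableAt
  have t4 : DifferentiableAt ℝ (fun u => W 1 t u y (-1 + β * b u y)) x :=
    (hasDerivAt_line' (hW 1) hγ).differentiableAt
  exact (t1.mul t2).add (t3.mul t4)

lemma divInt_diff_y {β : ℝ} {b : ℝ → ℝ → ℝ} (hb : Smooth2 b)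
    {W : Fin 2 → ℝ → ℝ → ℝ → ℝ → ℝ} (hW : ∀ j, Smooth4 (W j)) (t x y zp : ℝ) :
    DifferentiableAt ℝ (fun v => divInt β b W t x v zp) y := by
  have hfun : (fun v => divInt β b W t x v zp) = fun v =>
      (∫ z'' in (-1 + β * b x v)..zp, (fun q : ℝ × ℝ =>
        D4 (W 0) (0, 1, 0, 0) (t, x, q.1, q.2) + D4 (W 1) (0, 0, 1, 0) (t, x, q.1, q.2)) (v, z''))
      - β * (D2 b (1, 0) (x, v) * W 0 t x v (-1 + β * b x v)
           + D2 b (0, 1) (x, v) * W 1 t x v (-1 + β * b x v)) :=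
    funext fun v => divInt_formula hb hW t x v zp
  rw [hfun]
  have emb : ContDiff ℝ (⊤ : ℕ∞) (fun q : ℝ × ℝ => ((t, x, q.1, q.2) : ℝ × ℝ × ℝ × ℝ)) :=
    contDiff_const.prodMk (contDiff_const.prodMk (contDiff_fst.prodMk contDiff_snd))
  have hG : ContDiff ℝ (⊤ : ℕ∞) (fun q : ℝ × ℝ =>
      D4 (W 0) (0, 1, 0, 0) (t, x, q.1, q.2) + D4 (W 1) (0, 0, 1, 0) (t, x, q.1, q.2)) :=
    ((D4_contDiff (hW 0) _).comp emb).add ((D4_contDiff (hW 1) _).comp emb)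
  have hay : HasDerivAt (fun v => -1 + β * b x v) (β * D2 b (0, 1) (x, y)) y :=
    ((D2_hy hb x y).const_mul β).const_add (-1)
  refine DifferentiableAt.sub (leibniz_lower hG hay zp).differentiableAt ?_
  refine DifferentiableAt.const_mul ?_ β
  have e2 : ContDiff ℝ (⊤ : ℕ∞) (fun v : ℝ => ((x, v) : ℝ × ℝ)) := contDiff_const.prodMk contDiff_id
  have t1 : DifferentiableAt ℝ (fun v => D2 b (1, 0) (x, v)) y :=
    (((D2_contDiff hb _).comp e2).differentiable (by simp)).differentiableAt
  have t3 : DifferentiableAt ℝ (fun v => D2 b (0, 1) (x, v)) y :=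
    (((D2_contDiff hb _).comp e2).differentiable (by simp)).differentiableAt
  have hγ : HasDerivAt (fun v => ((t, x, v, -1 + β * b x v) : ℝ × ℝ × ℝ × ℝ))
      ((0, 0, 1, β * D2 b (0, 1) (x, y))) y :=
    (hasDerivAt_const y t).prodMk ((hasDerivAt_const y x).prodMk ((hasDerivAt_id y).prodMk hay))
  have t2 : DifferentiableAt ℝ (fun v => W 0 t x v (-1 + β * b x v)) y :=
    (hasDerivAt_line' (hW 0) hγ).differentiableAt
  have t4 : DifferentiableAt ℝ (fun v => W 1 t x v (-1 + β * b x v)) y :=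
    (hasDerivAt_line' (hW 1) hγ).differentiableAt
  exact (t1.mul t2).add (t3.mul t4)

lemma smooth4_of_smooth3 {Vb : ℝ → ℝ → ℝ → ℝ} (h : Smooth3 Vb) :
    Smooth4 (fun t x y _ => Vb t x y) :=
  h.comp (contDiff_fst.prodMk ((contDiff_fst.comp contDiff_snd).prodMk
    (contDiff_fst.comp (contDiff_snd.comp contDiff_snd))))

lemma divInt_Vb_formula {β : ℝ} {b : ℝ → ℝ → ℝ} (hb : Smooth2 b)
    {Vb : Fin 2 → ℝ → ℝ → ℝ → ℝ} (hVb : ∀ j, Smooth3 (Vb j)) (t x y zp : ℝ) :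
    divInt β b (fun j t' x' y' _ => Vb j t' x' y') t x y zp
      = (zp - (-1 + β * b x y)) * (D3 (Vb 0) (0, 1, 0) (t, x, y) + D3 (Vb 1) (0, 0, 1) (t, x, y))
        - β * (D2 b (1, 0) (x, y) * Vb 0 t x y + D2 b (0, 1) (x, y) * Vb 1 t x y) := by
  have hW : ∀ j : Fin 2, Smooth4 (fun t' x' y' (_ : ℝ) => Vb j t' x' y') :=
    fun j => smooth4_of_smooth3 (hVb j)
  rw [divInt_formula hb hW t x y zp]
  have e0 : ∀ z'' : ℝ, D4 (fun t' x' y' (_ : ℝ) => Vb 0 t' x' y') (0, 1, 0, 0) (t, x, y, z'')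
      = D3 (Vb 0) (0, 1, 0) (t, x, y) := fun z'' =>
    (D4_hx (hW 0) t x y z'').unique (D3_hx (hVb 0) t x y)
  have e1 : ∀ z'' : ℝ, D4 (fun t' x' y' (_ : ℝ) => Vb 1 t' x' y') (0, 0, 1, 0) (t, x, y, z'')
      = D3 (Vb 1) (0, 0, 1) (t, x, y) := fun z'' =>
    (D4_hy (hW 1) t x y z'').unique (D3_hy (hVb 1) t x y)
  rw [intervalIntegral.integral_congr (g := fun _ : ℝ =>
    D3 (Vb 0) (0, 1, 0) (t, x, y) + D3 (Vb 1) (0, 0, 1) (t, x, y))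
    (fun z'' _ => by rw [e0 z'', e1 z''])]
  rw [intervalIntegral.integral_const]
  simp [smul_eq_mul]

lemma divInt_Vb_deriv_x {β : ℝ} {b : ℝ → ℝ → ℝ} (hb : Smooth2 b)
    {Vb : Fin 2 → ℝ → ℝ → ℝ → ℝ} (hVb : ∀ j, Smooth3 (Vb j)) (t x y : ℝ) :
    ∃ c0 c1 : ℝ, ∀ zp : ℝ,
      deriv (fun u => divInt β b (fun j t' x' y' _ => Vb j t' x' y') t u y zp) x
        = c0 + zp * c1 := by
  set C : ℝ → ℝ := fun u => D3 (Vb 0) (0, 1, 0) (t, u, y) + D3 (Vb 1) (0, 0, 1) (t, u, y) with hCdef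
  set B : ℝ → ℝ := fun u => β * (D2 b (1, 0) (u, y) * Vb 0 t u y + D2 b (0, 1) (u, y) * Vb 1 t u y)
    with hBdef
  have e2 : ContDiff ℝ (⊤ : ℕ∞) (fun u : ℝ => ((t, u, y) : ℝ × ℝ × ℝ)) :=
    contDiff_const.prodMk (contDiff_id.prodMk contDiff_const)
  have e2' : ContDiff ℝ (⊤ : ℕ∞) (fun u : ℝ => ((u, y) : ℝ × ℝ)) := contDiff_id.prodMk contDiff_const
  have hCdiff : DifferentiableAt ℝ C x := by
    apply DifferentiableAt.add <;>
      exact ((((D3_contDiff (hVb _) _).comp e2)).differentiable (by simp)).differentiableAt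
  have hBdiff : DifferentiableAt ℝ B x := by
    apply DifferentiableAt.const_mul
    apply DifferentiableAt.add <;>
      exact ((((D2_contDiff hb _).comp e2')).differentiable (by simp)).differentiableAt.mul
        (((hVb _).comp e2).differentiable (by simp)).differentiableAt
  have hax : HasDerivAt (fun u => -1 + β * b u y) (β * D2 b (1, 0) (x, y)) x :=
    ((D2_hx hb x y).const_mul β).const_add (-1)
  refine ⟨-(β * D2 b (1, 0) (x, y)) * C x - (-1 + β * b x y) * deriv C x - deriv B x,
    deriv C x, fun zp => ?_⟩
  have hfun : (fun u => divInt β b (fun j t' x' y' _ => Vb j t' x' y') t u y zp)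
      = fun u => (zp - (-1 + β * b u y)) * C u - B u :=
    funext fun u => divInt_Vb_formula hb hVb t u y zp
  rw [hfun]
  have hd : HasDerivAt (fun u => (zp - (-1 + β * b u y)) * C u - B u)
      ((-(β * D2 b (1, 0) (x, y))) * C x + (zp - (-1 + β * b x y)) * deriv C x - deriv B x) x := by
    exact (((hax.neg.const_add zp).mul hCdiff.hasDerivAt)).sub hBdiff.hasDerivAt
  rw [hd.deriv]; ring

lemma divInt_Vb_deriv_y {β : ℝ} {b : ℝ → ℝ → ℝ} (hb : Smooth2 b)
    {Vb : Fin 2 → ℝ → ℝ → ℝ → ℝ} (hVb : ∀ j, Smooth3 (Vb j)) (t x y : ℝ) :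
    ∃ c0 c1 : ℝ, ∀ zp : ℝ,
      deriv (fun v => divInt β b (fun j t' x' y' _ => Vb j t' x' y') t x v zp) y
        = c0 + zp * c1 := by
  set C : ℝ → ℝ := fun v => D3 (Vb 0) (0, 1, 0) (t, x, v) + D3 (Vb 1) (0, 0, 1) (t, x, v) with hCdef
  set B : ℝ → ℝ := fun v => β * (D2 b (1, 0) (x, v) * Vb 0 t x v + D2 b (0, 1) (x, v) * Vb 1 t x v)
    with hBdef
  have e2 : ContDiff ℝ (⊤ : ℕ∞) (fun v : ℝ => ((t, x, v) : ℝ × ℝ × ℝ)) :=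
    contDiff_const.prodMk (contDiff_const.prodMk contDiff_id)
  have e2' : ContDiff ℝ (⊤ : ℕ∞) (fun v : ℝ => ((x, v) : ℝ × ℝ)) := contDiff_const.prodMk contDiff_id
  have hCdiff : DifferentiableAt ℝ C y := by
    apply DifferentiableAt.add <;>
      exact ((((D3_contDiff (hVb _) _).comp e2)).differentiable (by simp)).differentiableAt
  have hBdiff : DifferentiableAt ℝ B y := by
    apply DifferentiableAt.const_mul
    apply DifferentiableAt.add <;>
      exact ((((D2_contDiff hb _).comp e2')).differentiable (by simp)).differentiableAt.mul
        (((hVb _).comp e2).differentiable (by simp)).differentiableAt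
  have hay : HasDerivAt (fun v => -1 + β * b x v) (β * D2 b (0, 1) (x, y)) y :=
    ((D2_hy hb x y).const_mul β).const_add (-1)
  refine ⟨-(β * D2 b (0, 1) (x, y)) * C y - (-1 + β * b x y) * deriv C y - deriv B y,
    deriv C y, fun zp => ?_⟩
  have hfun : (fun v => divInt β b (fun j t' x' y' _ => Vb j t' x' y') t x v zp)
      = fun v => (zp - (-1 + β * b x v)) * C v - B v :=
    funext fun v => divInt_Vb_formula hb hVb t x v zp
  rw [hfun]
  have hd : HasDerivAt (fun v => (zp - (-1 + β * b x v)) * C v - B v)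
      ((-(β * D2 b (0, 1) (x, y))) * C y + (zp - (-1 + β * b x y)) * deriv C y - deriv B y) y := by
    exact (((hay.neg.const_add zp).mul hCdiff.hasDerivAt)).sub hBdiff.hasDerivAt
  rw [hd.deriv]; ring

lemma divInt_U_eq {ε β μ : ℝ} {ζ : ℝ → ℝ → ℝ → ℝ} {b : ℝ → ℝ → ℝ}
    {Vb : Fin 2 → ℝ → ℝ → ℝ → ℝ} {Vs : Fin 2 → ℝ → ℝ → ℝ → ℝ → ℝ}
    {wt : ℝ → ℝ → ℝ → ℝ → ℝ}
    (hb : Smooth2 b) (hVb : ∀ i, Smooth3 (Vb i)) (hVs : ∀ i, Smooth4 (Vs i))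
    (hwt : Smooth4 wt)
    (hdiv : ∀ t x y z, -1 + β * b x y ≤ z → z ≤ ε * ζ t x y →
      px (Vb 0) t x y + py (Vb 1) t x y
        + Real.sqrt μ * (pd4 0 (Vs 0) t x y z + pd4 1 (Vs 1) t x y z)
        + pz wt t x y z = 0)
    (hbott : ∀ t x y,
      wt t x y (-1 + β * b x y) =
        β * (qx b x y * (Vb 0 t x y + Real.sqrt μ * Vs 0 t x y (-1 + β * b x y))
          + qy b x y * (Vb 1 t x y + Real.sqrt μ * Vs 1 t x y (-1 + β * b x y)))) :
    ∀ t x y zp, -1 + β * b x y ≤ zp → zp ≤ ε * ζ t x y →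
      divInt β b (fun j t' x' y' z' => Vb j t' x' y' + Real.sqrt μ * Vs j t' x' y' z')
          t x y zp
        = -(wt t x y zp) := by
  intro t x y zp hzp1 hzp2
  set U : Fin 2 → ℝ → ℝ → ℝ → ℝ → ℝ :=
    fun j t' x' y' z' => Vb j t' x' y' + Real.sqrt μ * Vs j t' x' y' z' with hUdef
  have hU : ∀ j, Smooth4 (U j) := fun j =>
    (smooth4_of_smooth3 (hVb j)).add (contDiff_const.mul (hVs j))
  rw [divInt_formula hb hU t x y zp]
  -- rewrite the integrand using the divergence equation
  have hint : ∀ z'' ∈ Set.uIcc (-1 + β * b x y) zp,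
      (D4 (U 0) (0, 1, 0, 0) (t, x, y, z'') + D4 (U 1) (0, 0, 1, 0) (t, x, y, z''))
        = -(pz wt t x y z'') := by
    intro z'' hz''
    have hmem : -1 + β * b x y ≤ z'' ∧ z'' ≤ ε * ζ t x y := by
      rw [Set.uIcc_of_le hzp1] at hz''
      exact ⟨hz''.1, le_trans hz''.2 hzp2⟩
    have e0 : D4 (U 0) (0, 1, 0, 0) (t, x, y, z'')
        = D3 (Vb 0) (0, 1, 0) (t, x, y) + Real.sqrt μ * D4 (Vs 0) (0, 1, 0, 0) (t, x, y, z'') :=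
      (D4_hx (hU 0) t x y z'').unique
        ((D3_hx (hVb 0) t x y).add ((D4_hx (hVs 0) t x y z'').const_mul (Real.sqrt μ)))
    have e1 : D4 (U 1) (0, 0, 1, 0) (t, x, y, z'')
        = D3 (Vb 1) (0, 0, 1) (t, x, y) + Real.sqrt μ * D4 (Vs 1) (0, 0, 1, 0) (t, x, y, z'') :=
      (D4_hy (hU 1) t x y z'').unique
        ((D3_hy (hVb 1) t x y).add ((D4_hy (hVs 1) t x y z'').const_mul (Real.sqrt μ)))
    have hd := hdiv t x y z'' hmem.1 hmem.2
    rw [px] at hd; rw [py] at hd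
    rw [(D3_hx (hVb 0) t x y).deriv] at hd
    rw [(D3_hy (hVb 1) t x y).deriv] at hd
    have p0 : pd4 0 (Vs 0) t x y z'' = D4 (Vs 0) (0, 1, 0, 0) (t, x, y, z'') := by
      simp only [pd4, if_pos rfl]; exact (D4_hx (hVs 0) t x y z'').deriv
    have p1 : pd4 1 (Vs 1) t x y z'' = D4 (Vs 1) (0, 0, 1, 0) (t, x, y, z'') := by
      simp only [pd4]; norm_num; exact (D4_hy (hVs 1) t x y z'').deriv
    rw [p0, p1] at hd
    rw [e0, e1]; linarith
  rw [intervalIntegral.integral_congr hint]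
  -- FTC for the wt integral
  have hwz : ∀ u : ℝ, HasDerivAt (fun w => wt t x y w) (D4 wt (0, 0, 0, 1) (t, x, y, u)) u :=
    fun u => D4_hz hwt t x y u
  have hderiv_eq : (deriv fun w => wt t x y w)
      = fun u => D4 wt (0, 0, 0, 1) (t, x, y, u) := funext fun u => (hwz u).deriv
  have hftc : (∫ z'' in (-1 + β * b x y)..zp, pz wt t x y z'')
      = wt t x y zp - wt t x y (-1 + β * b x y) := by
    have : (∫ z'' in (-1 + β * b x y)..zp, pz wt t x y z'')
        = ∫ z'' in (-1 + β * b x y)..zp, deriv (fun w => wt t x y w) z'' := rfl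
    rw [this]
    apply intervalIntegral.integral_deriv_eq_sub
    · exact fun u _ => (hwz u).differentiableAt
    · rw [hderiv_eq]
      exact (((D4_contDiff hwt _).continuous).comp (by continuity)).intervalIntegrable _ _
  rw [intervalIntegral.integral_neg, hftc]
  -- bottom boundary condition
  have hbb := hbott t x y
  rw [qx, qy] at hbb
  rw [(D2_hx hb x y).deriv, (D2_hy hb x y).deriv] at hbb
  have : U 0 t x y (-1 + β * b x y)
      = Vb 0 t x y + Real.sqrt μ * Vs 0 t x y (-1 + β * b x y) := rfl
  have h1 : U 1 t x y (-1 + β * b x y)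
      = Vb 1 t x y + Real.sqrt μ * Vs 1 t x y (-1 + β * b x y) := rfl
  rw [this, h1, ← hbb]
  ring

lemma cont_emb4 (t x y : ℝ) : Continuous (fun z : ℝ => ((t, x, y, z) : ℝ × ℝ × ℝ × ℝ)) :=
  continuous_const.prodMk (continuous_const.prodMk (continuous_const.prodMk continuous_id))


set_option maxHeartbeats 2000000 in
/-- the exact identity (1 − μT*)V* = √μ T*V̄ + V*_sh. -/
theorem exact_shear_identity
    (ε β μ : ℝ) (hε : 0 < ε) (hβ : 0 < β) (hμ : 0 < μ)
    (ζ : ℝ → ℝ → ℝ → ℝ) (b : ℝ → ℝ → ℝ)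
    (Vb : Fin 2 → ℝ → ℝ → ℝ → ℝ)
    (Vs : Fin 2 → ℝ → ℝ → ℝ → ℝ → ℝ)
    (wt : ℝ → ℝ → ℝ → ℝ → ℝ)
    (ω : Fin 2 → ℝ → ℝ → ℝ → ℝ → ℝ)
    (hζ : Smooth3 ζ) (hb : Smooth2 b)
    (hVb : ∀ i, Smooth3 (Vb i)) (hVs : ∀ i, Smooth4 (Vs i))
    (hwt : Smooth4 wt) (hω : ∀ i, Smooth4 (ω i))
    (hpos : ∀ t x y, 0 < 1 + ε * ζ t x y - β * b x y)
    -- (i) ∂_z V* − √μ ∇w̃ = −ω_h^⊥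
    (hcurl : ∀ i, ∀ t x y z, -1 + β * b x y ≤ z → z ≤ ε * ζ t x y →
      pz (Vs i) t x y z - Real.sqrt μ * pd4 i wt t x y z =
        -(if i = 0 then -(ω 1 t x y z) else ω 0 t x y z))
    -- (ii) divergence equation
    (hdiv : ∀ t x y z, -1 + β * b x y ≤ z → z ≤ ε * ζ t x y →
      px (Vb 0) t x y + py (Vb 1) t x y
        + Real.sqrt μ * (pd4 0 (Vs 0) t x y z + pd4 1 (Vs 1) t x y z)
        + pz wt t x y z = 0)
    -- (iii) bottom condition
    (hbott : ∀ t x y,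
      wt t x y (-1 + β * b x y) =
        β * (qx b x y * (Vb 0 t x y + Real.sqrt μ * Vs 0 t x y (-1 + β * b x y))
          + qy b x y * (Vb 1 t x y + Real.sqrt μ * Vs 1 t x y (-1 + β * b x y))))
    -- (iv) V* has zero vertical mean
    (hmean : ∀ i, ∀ t x y,
      (∫ z in (-1 + β * b x y)..(ε * ζ t x y), Vs i t x y z) = 0) :
    ∀ (i : Fin 2) (t x y z : ℝ), -1 + β * b x y ≤ z → z ≤ ε * ζ t x y →
      Vs i t x y z - μ * Tstar ε β ζ b Vs i t x y z =
        Real.sqrt μ * Tstar ε β ζ b (fun j t' x' y' _ => Vb j t' x' y') i t x y z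
          + Vshstar ε β ζ b ω i t x y z := by
  intro i t x y z hz1 hz2
  have hsμ : Real.sqrt μ ≠ 0 := (Real.sqrt_pos.2 hμ).ne'
  have hμeq : Real.sqrt μ * Real.sqrt μ = μ := Real.mul_self_sqrt hμ.le
  have hh : (1 + ε * ζ t x y - β * b x y) ≠ 0 := (hpos t x y).ne'
  have hbt : (-1 + β * b x y) ≤ ε * ζ t x y := le_trans hz1 hz2
  set U : Fin 2 → ℝ → ℝ → ℝ → ℝ → ℝ :=
    fun j t' x' y' z' => Vb j t' x' y' + Real.sqrt μ * Vs j t' x' y' z' with hUdef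
  set Wb : Fin 2 → ℝ → ℝ → ℝ → ℝ → ℝ :=
    fun j t' x' y' _ => Vb j t' x' y' with hWbdef
  have hU : ∀ j, Smooth4 (U j) := fun j =>
    (smooth4_of_smooth3 (hVb j)).add (contDiff_const.mul (hVs j))
  have hWbS : ∀ j, Smooth4 (Wb j) := fun j => smooth4_of_smooth3 (hVb j)
  -- continuity of the pd4 i wt slice
  have hpd4wt_eq : (fun zp => pd4 i wt t x y zp) = (fun zp =>
      D4 wt (if i = 0 then ((0,1,0,0) : ℝ×ℝ×ℝ×ℝ) else (0,0,1,0)) (t, x, y, zp)) := by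
    funext zp
    fin_cases i
    · simpa [pd4] using (D4_hx hwt t x y zp).deriv
    · simpa [pd4] using (D4_hy hwt t x y zp).deriv
  have hcontpd4wt : Continuous (fun zp => pd4 i wt t x y zp) := by
    rw [hpd4wt_eq]
    exact (D4_contDiff hwt _).continuous.comp (cont_emb4 _ _ _)
  -- the vorticity integrand and its continuity
  set gω : ℝ → ℝ := fun zp => if i = 0 then -(ω 1 t x y zp) else ω 0 t x y zp with hgωdef
  have hcontgω : Continuous gω := by
    have c1 : Continuous (fun zp : ℝ => ω 1 t x y zp) :=
      ((hω 1).comp (contDiff_const.prodMk (contDiff_const.prodMk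
        (contDiff_const.prodMk contDiff_id)))).continuous
    have c0 : Continuous (fun zp : ℝ => ω 0 t x y zp) :=
      ((hω 0).comp (contDiff_const.prodMk (contDiff_const.prodMk
        (contDiff_const.prodMk contDiff_id)))).continuous
    fin_cases i
    · simpa [hgωdef] using c1.fun_neg
    · simpa [hgωdef] using c0
  -- interior identity for the U-family integrand
  have hK2 : ∀ zp : ℝ, -1 + β * b x y < zp → zp < ε * ζ t x y →
      pd3 i (fun t' x' y' => divInt β b U t' x' y' zp) t x y = -(pd4 i wt t x y zp) := by
    intro zp h1 h2
    fin_cases i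
    · have hcb : Continuous (fun u => -1 + β * b u y) :=
        continuous_const.add (continuous_const.mul
          ((hb.comp (contDiff_id.prodMk contDiff_const)).continuous))
      have hct : Continuous (fun u => ε * ζ t u y) :=
        continuous_const.mul ((hζ.comp (contDiff_const.prodMk
          (contDiff_id.prodMk contDiff_const))).continuous)
      have ev1 : ∀ᶠ u in nhds x, -1 + β * b u y < zp :=
        Filter.eventually_of_mem ((isOpen_lt hcb continuous_const).mem_nhds h1) (fun u hu => hu)
      have ev2 : ∀ᶠ u in nhds x, zp < ε * ζ t u y :=
        Filter.eventually_of_mem ((isOpen_lt continuous_const hct).mem_nhds h2) (fun u hu => hu)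
      have heq : (fun u => divInt β b U t u y zp) =ᶠ[nhds x] (fun u => -(wt t u y zp)) := by
        filter_upwards [ev1, ev2] with u hu1 hu2
        exact divInt_U_eq hb hVb hVs hwt hdiv hbott t u y zp hu1.le hu2.le
      have hd := heq.deriv_eq
      rw [deriv.fun_neg] at hd
      simpa [pd3, px, pd4] using hd
    · have hcb : Continuous (fun v => -1 + β * b x v) :=
        continuous_const.add (continuous_const.mul
          ((hb.comp (contDiff_const.prodMk contDiff_id)).continuous))
      have hct : Continuous (fun v => ε * ζ t x v) :=
        continuous_const.mul ((hζ.comp (contDiff_const.prodMk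
          (contDiff_const.prodMk contDiff_id))).continuous)
      have ev1 : ∀ᶠ v in nhds y, -1 + β * b x v < zp :=
        Filter.eventually_of_mem ((isOpen_lt hcb continuous_const).mem_nhds h1) (fun v hv => hv)
      have ev2 : ∀ᶠ v in nhds y, zp < ε * ζ t x v :=
        Filter.eventually_of_mem ((isOpen_lt continuous_const hct).mem_nhds h2) (fun v hv => hv)
      have heq : (fun v => divInt β b U t x v zp) =ᶠ[nhds y] (fun v => -(wt t x v zp)) := by
        filter_upwards [ev1, ev2] with v hv1 hv2
        exact divInt_U_eq hb hVb hVs hwt hdiv hbott t x v zp hv1.le hv2.le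
      have hd := heq.deriv_eq
      rw [deriv.fun_neg] at hd
      simpa [pd3, py, pd4] using hd
  -- pointwise linearity of divInt
  have hdivlin : ∀ t' x' y' zp' : ℝ, divInt β b U t' x' y' zp'
      = divInt β b Wb t' x' y' zp' + Real.sqrt μ * divInt β b Vs t' x' y' zp' := by
    intro t' x' y' zp'
    rw [divInt_formula hb hU t' x' y' zp', divInt_formula hb hWbS t' x' y' zp',
        divInt_formula hb hVs t' x' y' zp']
    have e0 : ∀ z'' : ℝ, D4 (U 0) (0,1,0,0) (t', x', y', z'')
        = D4 (Wb 0) (0,1,0,0) (t', x', y', z'')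
          + Real.sqrt μ * D4 (Vs 0) (0,1,0,0) (t', x', y', z'') := fun z'' =>
      (D4_hx (hU 0) t' x' y' z'').unique
        ((D4_hx (hWbS 0) t' x' y' z'').add ((D4_hx (hVs 0) t' x' y' z'').const_mul _))
    have e1 : ∀ z'' : ℝ, D4 (U 1) (0,0,1,0) (t', x', y', z'')
        = D4 (Wb 1) (0,0,1,0) (t', x', y', z'')
          + Real.sqrt μ * D4 (Vs 1) (0,0,1,0) (t', x', y', z'') := fun z'' =>
      (D4_hy (hU 1) t' x' y' z'').unique
        ((D4_hy (hWbS 1) t' x' y' z'').add ((D4_hy (hVs 1) t' x' y' z'').const_mul _))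
    have hcong : ∀ z'' ∈ Set.uIcc (-1 + β * b x' y') zp',
        (D4 (U 0) (0,1,0,0) (t', x', y', z'') + D4 (U 1) (0,0,1,0) (t', x', y', z''))
        = ((D4 (Wb 0) (0,1,0,0) (t', x', y', z'') + D4 (Wb 1) (0,0,1,0) (t', x', y', z''))
          + Real.sqrt μ * (D4 (Vs 0) (0,1,0,0) (t', x', y', z'')
            + D4 (Vs 1) (0,0,1,0) (t', x', y', z''))) := by
      intro z'' _
      rw [e0 z'', e1 z'']; ring
    rw [intervalIntegral.integral_congr hcong]
    have cWb : Continuous (fun z'' : ℝ => D4 (Wb 0) (0,1,0,0) (t', x', y', z'')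
        + D4 (Wb 1) (0,0,1,0) (t', x', y', z'')) :=
      ((D4_contDiff (hWbS 0) _).continuous.comp (cont_emb4 _ _ _)).add
        ((D4_contDiff (hWbS 1) _).continuous.comp (cont_emb4 _ _ _))
    have cVs : Continuous (fun z'' : ℝ => D4 (Vs 0) (0,1,0,0) (t', x', y', z'')
        + D4 (Vs 1) (0,0,1,0) (t', x', y', z'')) :=
      ((D4_contDiff (hVs 0) _).continuous.comp (cont_emb4 _ _ _)).add
        ((D4_contDiff (hVs 1) _).continuous.comp (cont_emb4 _ _ _))
    rw [intervalIntegral.integral_add (cWb.intervalIntegrable _ _)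
      ((cVs.intervalIntegrable _ _).const_mul _), intervalIntegral.integral_const_mul]
    have hU0b : U 0 t' x' y' (-1 + β * b x' y')
        = Wb 0 t' x' y' (-1 + β * b x' y')
          + Real.sqrt μ * Vs 0 t' x' y' (-1 + β * b x' y') := rfl
    have hU1b : U 1 t' x' y' (-1 + β * b x' y')
        = Wb 1 t' x' y' (-1 + β * b x' y')
          + Real.sqrt μ * Vs 1 t' x' y' (-1 + β * b x' y') := rfl
    rw [hU0b, hU1b]; ring
  -- linearity at the level of pd3
  have hlin : ∀ zp : ℝ,
      pd3 i (fun t' x' y' => divInt β b U t' x' y' zp) t x y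
      = pd3 i (fun t' x' y' => divInt β b Wb t' x' y' zp) t x y
        + Real.sqrt μ * pd3 i (fun t' x' y' => divInt β b Vs t' x' y' zp) t x y := by
    intro zp
    fin_cases i
    · have hfe : (fun u => divInt β b U t u y zp)
          = fun u => divInt β b Wb t u y zp + Real.sqrt μ * divInt β b Vs t u y zp :=
        funext fun u => hdivlin t u y zp
      have hd : deriv (fun u => divInt β b U t u y zp) x
          = deriv (fun u => divInt β b Wb t u y zp) x
            + Real.sqrt μ * deriv (fun u => divInt β b Vs t u y zp) x := by
        rw [hfe, deriv_fun_add (divInt_diff_x hb hWbS t x y zp)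
          ((divInt_diff_x hb hVs t x y zp).const_mul _),
          deriv_const_mul _ (divInt_diff_x hb hVs t x y zp)]
      simpa [pd3, px] using hd
    · have hfe : (fun v => divInt β b U t x v zp)
          = fun v => divInt β b Wb t x v zp + Real.sqrt μ * divInt β b Vs t x v zp :=
        funext fun v => hdivlin t x v zp
      have hd : deriv (fun v => divInt β b U t x v zp) y
          = deriv (fun v => divInt β b Wb t x v zp) y
            + Real.sqrt μ * deriv (fun v => divInt β b Vs t x v zp) y := by
        rw [hfe, deriv_fun_add (divInt_diff_y hb hWbS t x y zp)
          ((divInt_diff_y hb hVs t x y zp).const_mul _),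
          deriv_const_mul _ (divInt_diff_y hb hVs t x y zp)]
      simpa [pd3, py] using hd
  -- affine structure of the Wb integrand
  have hcBex : ∃ c0 c1 : ℝ, ∀ zp : ℝ,
      pd3 i (fun t' x' y' => divInt β b Wb t' x' y' zp) t x y = c0 + zp * c1 := by
    fin_cases i
    · obtain ⟨c0, c1, hc⟩ := divInt_Vb_deriv_x (β := β) hb hVb t x y
      exact ⟨c0, c1, fun zp => by simpa [pd3, px] using hc zp⟩
    · obtain ⟨c0, c1, hc⟩ := divInt_Vb_deriv_y (β := β) hb hVb t x y
      exact ⟨c0, c1, fun zp => by simpa [pd3, py] using hc zp⟩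
  obtain ⟨c0, c1, hcB⟩ := hcBex
  -- the primitives
  set Wf : ℝ → ℝ := fun zq => ∫ zp in zq..(ε * ζ t x y), pd4 i wt t x y zp with hWfdef
  have hcontWf : Continuous Wf := by
    have h1 : Continuous fun zq => ∫ zp in (ε * ζ t x y)..zq, pd4 i wt t x y zp :=
      intervalIntegral.continuous_primitive
        (fun a b' => hcontpd4wt.intervalIntegrable a b') _
    have h2 : Wf = fun zq => -(∫ zp in (ε * ζ t x y)..zq, pd4 i wt t x y zp) :=
      funext fun zq => (intervalIntegral.integral_symm _ _)
    rw [h2]; exact h1.neg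
  set TBc : ℝ → ℝ := fun zq => ∫ zp in zq..(ε * ζ t x y), (c0 + zp * c1) with hTBcdef
  have hcontc : Continuous (fun zp : ℝ => c0 + zp * c1) := by continuity
  have hcontTBc : Continuous TBc := by
    have h1 : Continuous fun zq => ∫ zp in (ε * ζ t x y)..zq, (c0 + zp * c1) :=
      intervalIntegral.continuous_primitive (fun a b' => hcontc.intervalIntegrable a b') _
    have h2 : TBc = fun zq => -(∫ zp in (ε * ζ t x y)..zq, (c0 + zp * c1)) :=
      funext fun zq => (intervalIntegral.integral_symm _ _)
    rw [h2]; exact h1.neg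
  have hae : ∀ᵐ zp : ℝ, zp ≠ ε * ζ t x y := by
    rw [MeasureTheory.ae_iff]
    have hset : {a : ℝ | ¬a ≠ ε * ζ t x y} = {ε * ζ t x y} := by ext a; simp
    rw [hset]
    exact Real.volume_singleton
  -- evaluation of the three TTop's
  have hTU : ∀ zq : ℝ, -1 + β * b x y ≤ zq → zq ≤ ε * ζ t x y →
      TTop ε β ζ b U i t x y zq = -(Wf zq) := by
    intro zq hq1 hq2
    have hc : (∫ zp in zq..(ε * ζ t x y), pd3 i (fun t' x' y' => divInt β b U t' x' y' zp) t x y)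
        = ∫ zp in zq..(ε * ζ t x y), -(pd4 i wt t x y zp) := by
      apply intervalIntegral.integral_congr_ae
      filter_upwards [hae] with zp hne hzp
      rw [Set.uIoc_of_le hq2] at hzp
      exact hK2 zp (lt_of_le_of_lt hq1 hzp.1) (lt_of_le_of_ne hzp.2 hne)
    rw [TTop, hc, intervalIntegral.integral_neg]
  have hTB : ∀ zq : ℝ, TTop ε β ζ b Wb i t x y zq = TBc zq := by
    intro zq
    rw [TTop]
    exact intervalIntegral.integral_congr (fun zp _ => hcB zp)
  have hTS : ∀ zq : ℝ, -1 + β * b x y ≤ zq → zq ≤ ε * ζ t x y →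
      TTop ε β ζ b Vs i t x y zq = (-(Wf zq) - TBc zq) / Real.sqrt μ := by
    intro zq hq1 hq2
    have hc : (∫ zp in zq..(ε * ζ t x y), pd3 i (fun t' x' y' => divInt β b Vs t' x' y' zp) t x y)
        = ∫ zp in zq..(ε * ζ t x y), ((-(pd4 i wt t x y zp) - (c0 + zp * c1)) / Real.sqrt μ) := by
      apply intervalIntegral.integral_congr_ae
      filter_upwards [hae] with zp hne hzp
      rw [Set.uIoc_of_le hq2] at hzp
      have h2 := hK2 zp (lt_of_le_of_lt hq1 hzp.1) (lt_of_le_of_ne hzp.2 hne)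
      have hl := hlin zp
      rw [h2, hcB zp] at hl
      field_simp
      linarith
    rw [TTop, hc, intervalIntegral.integral_div,
      intervalIntegral.integral_sub ((hcontpd4wt.fun_neg).intervalIntegrable _ _)
        (hcontc.intervalIntegrable _ _), intervalIntegral.integral_neg]
  -- FTC for Vs on the column
  have hVsz : ∀ zq : ℝ, -1 + β * b x y ≤ zq → zq ≤ ε * ζ t x y →
      Vs i t x y zq = Vs i t x y (ε * ζ t x y) - Real.sqrt μ * Wf zq
        + Vsh ε ζ ω i t x y zq := by
    intro zq hq1 hq2
    have hwz : ∀ u : ℝ, HasDerivAt (fun w => Vs i t x y w)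
        (D4 (Vs i) (0, 0, 0, 1) (t, x, y, u)) u := fun u => D4_hz (hVs i) t x y u
    have hderiv_eq : (deriv fun w => Vs i t x y w)
        = fun u => D4 (Vs i) (0, 0, 0, 1) (t, x, y, u) := funext fun u => (hwz u).deriv
    have hftc : (∫ zp in zq..(ε * ζ t x y), deriv (fun w => Vs i t x y w) zp)
        = Vs i t x y (ε * ζ t x y) - Vs i t x y zq := by
      apply intervalIntegral.integral_deriv_eq_sub (fun u _ => (hwz u).differentiableAt)
      rw [hderiv_eq]
      exact (((D4_contDiff (hVs i) _).continuous).comp (cont_emb4 _ _ _)).intervalIntegrable _ _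
    have hsub : (∫ zp in zq..(ε * ζ t x y), deriv (fun w => Vs i t x y w) zp)
        = ∫ zp in zq..(ε * ζ t x y), (Real.sqrt μ * pd4 i wt t x y zp - gω zp) := by
      apply intervalIntegral.integral_congr
      intro zp hzp
      rw [Set.uIcc_of_le hq2] at hzp
      have hc := hcurl i t x y zp (le_trans hq1 hzp.1) hzp.2
      have hpzeq : pz (Vs i) t x y zp = deriv (fun w => Vs i t x y w) zp := rfl
      rw [hpzeq] at hc
      simp only [hgωdef]
      linarith
    rw [intervalIntegral.integral_sub ((hcontpd4wt.intervalIntegrable _ _).const_mul _)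
      (hcontgω.intervalIntegrable _ _), intervalIntegral.integral_const_mul] at hsub
    have hVshdef : Vsh ε ζ ω i t x y zq = ∫ zp in zq..(ε * ζ t x y), gω zp := rfl
    rw [hftc] at hsub
    rw [hVshdef]
    have hWfzq : Wf zq = ∫ zp in zq..(ε * ζ t x y), pd4 i wt t x y zp := rfl
    rw [hWfzq]
    linarith
  -- continuity of Vsh
  have hcontVsh : Continuous (fun zq => Vsh ε ζ ω i t x y zq) := by
    have h1 : Continuous fun zq => ∫ zp in (ε * ζ t x y)..zq, gω zp :=
      intervalIntegral.continuous_primitive (fun a b' => hcontgω.intervalIntegrable a b') _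
    have h2 : (fun zq => Vsh ε ζ ω i t x y zq)
        = fun zq => -(∫ zp in (ε * ζ t x y)..zq, gω zp) :=
      funext fun zq => (intervalIntegral.integral_symm _ _)
    rw [h2]; exact h1.neg
  -- averaging
  have havg : (1 + ε * ζ t x y - β * b x y) * Vs i t x y (ε * ζ t x y)
      = Real.sqrt μ * (∫ zq in (-1 + β * b x y)..(ε * ζ t x y), Wf zq)
        - (∫ zq in (-1 + β * b x y)..(ε * ζ t x y), Vsh ε ζ ω i t x y zq) := by
    have h0 : (∫ zq in (-1 + β * b x y)..(ε * ζ t x y), Vs i t x y zq) = 0 := hmean i t x y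
    have hcong : (∫ zq in (-1 + β * b x y)..(ε * ζ t x y), Vs i t x y zq)
        = ∫ zq in (-1 + β * b x y)..(ε * ζ t x y),
            (Vs i t x y (ε * ζ t x y) - Real.sqrt μ * Wf zq + Vsh ε ζ ω i t x y zq) := by
      apply intervalIntegral.integral_congr
      intro zq hzq
      rw [Set.uIcc_of_le hbt] at hzq
      exact hVsz zq hzq.1 hzq.2
    rw [hcong] at h0
    rw [intervalIntegral.integral_add
      ((_root_.intervalIntegrable_const).sub ((hcontWf.intervalIntegrable _ _).const_mul _))
      (hcontVsh.intervalIntegrable _ _),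
      intervalIntegral.integral_sub (_root_.intervalIntegrable_const)
      ((hcontWf.intervalIntegrable _ _).const_mul _),
      intervalIntegral.integral_const, intervalIntegral.integral_const_mul] at h0
    have hsm : (ε * ζ t x y - (-1 + β * b x y)) • Vs i t x y (ε * ζ t x y)
        = (1 + ε * ζ t x y - β * b x y) * Vs i t x y (ε * ζ t x y) := by
      rw [smul_eq_mul]; ring
    rw [hsm] at h0
    linarith
  -- final assembly
  rw [Tstar, Tstar, Vshstar]
  rw [hTS z hz1 hz2, hTB z]
  have hintTS : (∫ zq in (-1 + β * b x y)..(ε * ζ t x y), TTop ε β ζ b Vs i t x y zq)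
      = ((-(∫ zq in (-1 + β * b x y)..(ε * ζ t x y), Wf zq))
          - (∫ zq in (-1 + β * b x y)..(ε * ζ t x y), TBc zq)) / Real.sqrt μ := by
    have hc : (∫ zq in (-1 + β * b x y)..(ε * ζ t x y), TTop ε β ζ b Vs i t x y zq)
        = ∫ zq in (-1 + β * b x y)..(ε * ζ t x y), ((-(Wf zq) - TBc zq) / Real.sqrt μ) := by
      apply intervalIntegral.integral_congr
      intro zq hzq
      rw [Set.uIcc_of_le hbt] at hzq
      exact hTS zq hzq.1 hzq.2
    rw [hc, intervalIntegral.integral_div,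
      intervalIntegral.integral_sub ((hcontWf.fun_neg).intervalIntegrable _ _)
        (hcontTBc.intervalIntegrable _ _), intervalIntegral.integral_neg]
  have hintTB : (∫ zq in (-1 + β * b x y)..(ε * ζ t x y), TTop ε β ζ b Wb i t x y zq)
      = ∫ zq in (-1 + β * b x y)..(ε * ζ t x y), TBc zq :=
    intervalIntegral.integral_congr (fun zq _ => hTB zq)
  rw [hintTS, hintTB]
  rw [hVsz z hz1 hz2]
  have hVstop : Vs i t x y (ε * ζ t x y) = (1 + ε * ζ t x y - β * b x y)⁻¹ *
      (Real.sqrt μ * (∫ zq in (-1 + β * b x y)..(ε * ζ t x y), Wf zq)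
        - (∫ zq in (-1 + β * b x y)..(ε * ζ t x y), Vsh ε ζ ω i t x y zq)) := by
    rw [← havg, ← mul_assoc, inv_mul_cancel₀ hh, one_mul]
  rw [hVstop]
  set s : ℝ := Real.sqrt μ with hsdef
  rw [show μ = s * s from hμeq.symm]
  field_simp
  ring
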